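/- arXiv:1904.05654 — 5 statements merged into one kernel-verified Lean document; each statement's English description precedes it below -/
import Mathlib

section
/- Let ρ ∈ (0,1). For every real sequence (f_n)_{n≥0} with ∑_{n=0}^∞ (n+1) ρ^n f_n² < ∞, the series ∑_{n=0}^∞ (n+1) ρ^{n+1} f_n f_{n+1} converges absolutely and satisfies |∑_{n=0}^∞ (n+1) ρ^{n+1} f_n f_{n+1}| ≤ √ρ · ∑_{n=0}^∞ (n+1) ρ^n f_n². (Consequently the quadratic form (Af,f) = (2/(1+ρ)) ∑_n (n+1)ρ^{n+1} f_n f_{n+1} of the transition operator of the M/M/1-PS chain is bounded by (2√ρ/(1+ρ))‖f‖².) -/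
open MeasureTheory Filter Topology

/-- Pollaczek polynomials with parameters a = 1, b = 0. -/
noncomputable def pol : ℕ → ℝ → ℝ
  | 0, _ => 1
  | 1, x => 2 * x
  | (n+2), x => (2 * ((n:ℝ) + 2) * x * pol (n+1) x - ((n:ℝ) + 1) * pol n x) / ((n:ℝ) + 2)

/-- Rescaled polynomials `Q_n(x) = ρ^{-n/2} P_n((1+ρ)x/(2√ρ))`. -/
noncomputable def Q (ρ : ℝ) (n : ℕ) (x : ℝ) : ℝ :=
  pol n ((1 + ρ) * x / (2 * Real.sqrt ρ)) / (Real.sqrt ρ) ^ n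

/-- `x_ρ(θ) = (2√ρ/(1+ρ)) cos θ`. -/
noncomputable def X (ρ θ : ℝ) : ℝ := (2 * Real.sqrt ρ / (1 + ρ)) * Real.cos θ

/-- Density of the spectral measure in the variable θ. -/
noncomputable def W (θ : ℝ) : ℝ :=
  (Real.sin θ / Real.cosh (Real.pi * (Real.cos θ / Real.sin θ) / 2)) *
    Real.exp ((θ - Real.pi / 2) * (Real.cos θ / Real.sin θ))

/-- `G_ρ(θ) = 𝒫(θ, √ρ) = ∑ ρ^m Q_m(x_ρ(θ))`. -/
noncomputable def G (ρ θ : ℝ) : ℝ :=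
  (1 - 2 * Real.sqrt ρ * Real.cos θ + ρ) ^ (-(1:ℝ)/2) *
    Real.exp ((Real.cos θ / Real.sin θ) *
      Real.arctan (Real.sqrt ρ * Real.sin θ / (1 - Real.sqrt ρ * Real.cos θ)))

/-- Powers of the sub-stochastic tridiagonal matrix `A` of the absorbed M/M/1-PS chain. -/
noncomputable def ker (ρ : ℝ) : ℕ → ℕ → ℕ → ℝ
  | 0, n, m => if n = m then 1 else 0
  | (k+1), 0, m => (ρ / (1 + ρ)) * ker ρ k 1 m
  | (k+1), (n+1), m => (ρ / (1 + ρ)) * ker ρ k (n+2) m +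
      (((n:ℝ) + 1) / (((n:ℝ) + 2) * (1 + ρ))) * ker ρ k n m

/-- Boundedness of the quadratic form of the M/M/1-PS transition operator. -/
theorem stmt0 (ρ : ℝ) (hρ : ρ ∈ Set.Ioo (0:ℝ) 1) (f : ℕ → ℝ)
    (hf : Summable (fun n : ℕ => ((n:ℝ) + 1) * ρ ^ n * (f n) ^ 2)) :
    Summable (fun n : ℕ => |((n:ℝ) + 1) * ρ ^ (n+1) * f n * f (n+1)|) ∧
    |∑' n : ℕ, ((n:ℝ) + 1) * ρ ^ (n+1) * f n * f (n+1)| ≤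
      Real.sqrt ρ * ∑' n : ℕ, ((n:ℝ) + 1) * ρ ^ n * (f n) ^ 2 := by
  obtain ⟨hρ0, hρ1⟩ := hρ
  set s := Real.sqrt ρ with hs
  have hs0 : 0 < s := Real.sqrt_pos.2 hρ0
  have hs2 : s ^ 2 = ρ := Real.sq_sqrt hρ0.le
  set g : ℕ → ℝ := fun n => ((n:ℝ) + 1) * ρ ^ n * (f n) ^ 2 with hg
  have hgnn : ∀ n, 0 ≤ g n := fun n => by
    have := hρ0.le; positivity
  have hshift : Summable (fun n => g (n + 1)) := (summable_nat_add_iff 1).2 hf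
  have hbound : ∀ n : ℕ, |((n:ℝ) + 1) * ρ ^ (n+1) * f n * f (n+1)| ≤
      s / 2 * (g n + g (n + 1)) := by
    intro n
    have hrn : (0:ℝ) ≤ ρ ^ n := pow_nonneg hρ0.le n
    have h1 : |((n:ℝ) + 1) * ρ ^ (n+1) * f n * f (n+1)| =
        ((n:ℝ) + 1) * ρ ^ (n+1) * (|f n| * |f (n+1)|) := by
      rw [abs_mul, abs_mul, abs_mul, abs_of_nonneg (by positivity : (0:ℝ) ≤ (n:ℝ)+1),
        abs_of_nonneg (pow_nonneg hρ0.le (n+1))]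
      ring
    rw [h1]
    have hga : g n = ((n:ℝ) + 1) * ρ ^ n * |f n| ^ 2 := by
      simp [hg, sq_abs]
    have hgb : g (n + 1) = ((n:ℝ) + 2) * (ρ ^ n * ρ) * |f (n + 1)| ^ 2 := by
      simp only [hg, sq_abs]
      push_cast
      ring
    rw [hga, hgb]
    have hρrw : ρ ^ (n+1) = ρ ^ n * s ^ 2 := by rw [hs2, pow_succ]
    rw [hρrw]
    set a := |f n| with ha
    set b := |f (n + 1)| with hb
    have hn1 : (0:ℝ) ≤ (n:ℝ) + 1 := by positivity
    generalize hrdef : ρ ^ n = r at hrn ⊢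
    rw [← hs2]
    nlinarith [mul_nonneg (mul_nonneg hn1 hrn) (sq_nonneg (a - s * b)),
      mul_nonneg (mul_nonneg hs0.le hrn) (mul_nonneg (sq_nonneg s) (sq_nonneg b)),
      hs0.le]
  have hsum2 : Summable (fun n : ℕ => s / 2 * (g n + g (n + 1))) :=
    (hf.add hshift).mul_left _
  have hS : Summable (fun n : ℕ => |((n:ℝ) + 1) * ρ ^ (n+1) * f n * f (n+1)|) :=
    Summable.of_nonneg_of_le (fun n => abs_nonneg _) hbound hsum2
  refine ⟨hS, ?_⟩
  have habs : Summable (fun n : ℕ => ((n:ℝ) + 1) * ρ ^ (n+1) * f n * f (n+1)) :=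
    hS.of_abs
  have h2 : |∑' n : ℕ, ((n:ℝ) + 1) * ρ ^ (n+1) * f n * f (n+1)| ≤
      ∑' n : ℕ, |((n:ℝ) + 1) * ρ ^ (n+1) * f n * f (n+1)| := by
    have := norm_tsum_le_tsum_norm (f := fun n : ℕ => ((n:ℝ) + 1) * ρ ^ (n+1) * f n * f (n+1))
      (by simpa only [Real.norm_eq_abs] using hS)
    simpa only [Real.norm_eq_abs] using this
  have h3 : ∑' n : ℕ, |((n:ℝ) + 1) * ρ ^ (n+1) * f n * f (n+1)| ≤
      ∑' n : ℕ, s / 2 * (g n + g (n + 1)) :=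
    Summable.tsum_le_tsum hbound hS hsum2
  have h4 : ∑' n : ℕ, s / 2 * (g n + g (n + 1)) = s / 2 * (∑' n, g n + ∑' n, g (n+1)) := by
    rw [tsum_mul_left, Summable.tsum_add hf hshift]
  have h5 : ∑' n, g (n + 1) ≤ ∑' n, g n := by
    have := Summable.tsum_eq_zero_add hf
    have h0 := hgnn 0
    linarith
  calc |∑' n : ℕ, ((n:ℝ) + 1) * ρ ^ (n+1) * f n * f (n+1)|
      ≤ ∑' n : ℕ, s / 2 * (g n + g (n + 1)) := h2.trans h3
    _ = s / 2 * (∑' n, g n + ∑' n, g (n+1)) := h4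
    _ ≤ s * ∑' n, g n := by
        have hT : 0 ≤ ∑' n, g n := tsum_nonneg hgnn
        nlinarith [h5, hs0.le]
end

section
/- For every θ ∈ (0,π) and every real z with |z| < 1, the series ∑_{n=0}^∞ P_n(cos θ) z^n converges and its sum equals (1 − 2z cos θ + z²)^{−1/2} · exp( cot θ · arctan( z sin θ / (1 − z cos θ) ) ). -/
open MeasureTheory Filter Topology

/-!
Write `x = cos θ`, `σ = sin θ`. The three-term recurrence keeps the quadratic form
`Q_n = P_{n+1}² - 2x P_{n+1} P_n + P_n²`, which is positive definite since `x² < 1`, almost constant: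
`Q_{n+1} ≤ (1 + 1 / ((1 - x²)(n + 2))) Q_n`. Hence `P_n(x)` grows polynomially, the power series
`F(z) = ∑ P_n(x) zⁿ` converges on `|z| < 1` and may be differentiated termwise, and the recurrence
turns into the linear ODE `(1 - 2xz + z²) F' = (2x - z) F`. The closed form satisfies the same ODE
and equals `1 = F(0)` at `z = 0`, so the two agree on `(-1, 1)`.
-/

lemma le_mul_add_one_pow_of_succ_le {E : ℕ → ℝ} {c : ℝ} {m : ℕ} (hcm : c ≤ m)
    (hE_nonneg : ∀ n, 0 ≤ E n) (hE : ∀ n : ℕ, E (n + 1) ≤ (1 + c / (n + 2)) * E n) (n : ℕ) :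
    E n ≤ E 0 * (n + 1) ^ m := by
  induction n with
  | zero => simp
  | succ n ih =>
    have hfactor : 1 + c / (n + 2) ≤ (1 + 1 / (n + 1)) ^ m := calc
      1 + c / (n + 2) ≤ 1 + m * (1 / (n + 1)) := by
        rw [mul_one_div]
        gcongr; linarith
      _ ≤ (1 + 1 / (n + 1)) ^ m :=
        one_add_mul_le_pow (by linarith [show (0 : ℝ) ≤ 1 / (n + 1) by positivity]) m
    calc E (n + 1) ≤ (1 + c / (n + 2)) * E n := hE n
      _ ≤ (1 + 1 / (n + 1)) ^ m * (E 0 * (n + 1) ^ m) := by gcongr; exact hE_nonneg n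
      _ = E 0 * ((n + 1 : ℕ) + 1) ^ m := by
        rw [mul_left_comm, ← mul_pow]
        push_cast
        field_simp

lemma summable_succ_pow_mul_geometric (k : ℕ) {r : ℝ} (hr0 : 0 < r) (hr1 : r < 1) :
    Summable fun n : ℕ => ((n : ℝ) + 1) ^ k * r ^ n := by
  have h := (summable_nat_add_iff 1).mpr
    (summable_pow_mul_geometric_of_norm_lt_one (R := ℝ) k
      (by rwa [Real.norm_eq_abs, abs_of_pos hr0]))
  refine (h.mul_left r⁻¹).congr fun n => ?_
  rw [pow_succ, Nat.cast_succ]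
  field_simp

lemma hasSum_mul_zero_pow (a : ℕ → ℝ) : HasSum (fun n => a n * 0 ^ n) (a 0) := by
  simpa using hasSum_single (f := fun n => a n * 0 ^ n) 0 fun n hn => by simp [hn]

section PowerSeries

variable {a : ℕ → ℝ} {C : ℝ} {m : ℕ}

lemma norm_mul_deriv_pow_le (ha : ∀ n : ℕ, |a n| ≤ C * (n + 1) ^ m) {r w : ℝ} (hr : 0 < r)
    (hw : |w| < r) (n : ℕ) :
    ‖a n * (n * w ^ (n - 1))‖ ≤ C / r * ((n + 1) ^ (m + 1) * r ^ n) := by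
  cases n with
  | zero =>
    have : 0 ≤ C := le_trans (abs_nonneg _) (by simpa using ha 0)
    simp only [CharP.cast_eq_zero, zero_mul, mul_zero, norm_zero]
    positivity
  | succ n =>
    have hC := le_trans (abs_nonneg _) (ha (n + 1))
    calc ‖a (n + 1) * ((n + 1 : ℕ) * w ^ (n + 1 - 1))‖
          = |a (n + 1)| * ((n + 1 : ℕ) * |w| ^ n) := by
          simp only [norm_mul, norm_pow, Real.norm_eq_abs, Nat.abs_cast, Nat.add_sub_cancel]
      _ ≤ C * ((n + 1 : ℕ) + 1) ^ m * (((n + 1 : ℕ) + 1) * r ^ n) := by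
          gcongr
          · exact ha (n + 1)
          · linarith
      _ = C / r * (((n + 1 : ℕ) + 1) ^ (m + 1) * r ^ (n + 1)) := by
          field_simp
          ring

lemma summable_mul_pow_and_hasDerivAt_tsum (ha : ∀ n : ℕ, |a n| ≤ C * (n + 1) ^ m) {y : ℝ}
    (hy : |y| < 1) :
    Summable (fun n => a n * y ^ n) ∧ Summable (fun n => a n * (n * y ^ (n - 1))) ∧
      HasDerivAt (fun w => ∑' n, a n * w ^ n) (∑' n, a n * (n * y ^ (n - 1))) y := by
  obtain ⟨r, hyr, hr1⟩ := exists_between hy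
  have hr : 0 < r := (abs_nonneg y).trans_lt hyr
  have hu : Summable fun n : ℕ => C / r * ((n + 1) ^ (m + 1) * r ^ n) :=
    (summable_succ_pow_mul_geometric (m + 1) hr hr1).mul_left (C / r)
  have hball : y ∈ Metric.ball 0 r := by rwa [mem_ball_zero_iff, Real.norm_eq_abs]
  have hderiv (n : ℕ) (w : ℝ) (_ : w ∈ Metric.ball 0 r) :
      HasDerivAt (fun w => a n * w ^ n) (a n * (n * w ^ (n - 1))) w :=
    (hasDerivAt_pow n w).const_mul (a n)
  have hbound (n : ℕ) (w : ℝ) (hw : w ∈ Metric.ball 0 r) :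
      ‖a n * (n * w ^ (n - 1))‖ ≤ C / r * ((n + 1) ^ (m + 1) * r ^ n) :=
    norm_mul_deriv_pow_le ha hr (by rwa [mem_ball_zero_iff, Real.norm_eq_abs] at hw) n
  have h0 : Summable fun n => a n * 0 ^ n := (hasSum_mul_zero_pow a).summable
  exact ⟨summable_of_summable_hasDerivAt_of_isPreconnected (g := fun n w => a n * w ^ n) hu
      Metric.isOpen_ball (convex_ball 0 r).isPreconnected hderiv hbound (Metric.mem_ball_self hr)
      h0 hball,
    .of_norm_bounded hu fun n => hbound n y hball,
    hasDerivAt_tsum_of_isPreconnected (g := fun n w => a n * w ^ n) hu Metric.isOpen_ball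
      (convex_ball 0 r).isPreconnected hderiv hbound (Metric.mem_ball_self hr) h0 hball⟩

end PowerSeries

theorem eqOn_of_hasDerivAt_mul_self {𝕜 : Type*} [RCLike 𝕜] {s : Set 𝕜} (hs : IsOpen s)
    (hs' : IsPreconnected s) {f g h : 𝕜 → 𝕜} (hf : ∀ y ∈ s, HasDerivAt f (h y * f y) y)
    (hg : ∀ y ∈ s, HasDerivAt g (h y * g y) y) (hg0 : ∀ y ∈ s, g y ≠ 0) {y₀ : 𝕜} (hy₀ : y₀ ∈ s)
    (h₀ : f y₀ = g y₀) : Set.EqOn f g s := by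
  have hquot (y : 𝕜) (hy : y ∈ s) : HasDerivAt (fun y => f y / g y) 0 y :=
    ((hf y hy).div (hg y hy) (hg0 y hy)).congr_deriv (by ring)
  intro y hy
  have := hs.is_const_of_deriv_eq_zero hs'
    (fun y hy => (hquot y hy).differentiableAt.differentiableWithinAt)
    (fun y hy => (hquot y hy).deriv) hy hy₀
  rwa [h₀, div_self (hg0 y₀ hy₀), div_eq_one_iff_eq (hg0 y hy)] at this

lemma pol_add_two (n : ℕ) (x : ℝ) :
    pol (n + 2) x = 2 * x * pol (n + 1) x - (n + 1) / (n + 2) * pol n x := by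
  rw [pol]
  field_simp

-- At `n = 0` the truncated `n - 1` is harmless: its term carries the factor `n`.
lemma succ_mul_pol_succ (n : ℕ) (x : ℝ) :
    (n + 1) * pol (n + 1) x = 2 * x * ((n + 1) * pol n x) - n * pol (n - 1) x := by
  cases n with
  | zero => simp [pol]
  | succ n =>
    rw [pol_add_two]
    push_cast
    field_simp
    ring

section Energy

variable {x : ℝ}

def quadForm (x a b : ℝ) : ℝ := a ^ 2 - 2 * x * a * b + b ^ 2

lemma quadForm_eq (a b : ℝ) : quadForm x a b = (a - x * b) ^ 2 + (1 - x ^ 2) * b ^ 2 := by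
  unfold quadForm; ring

lemma quadForm_comm (a b : ℝ) : quadForm x a b = quadForm x b a := by
  unfold quadForm; ring

lemma mul_sq_le_quadForm (a b : ℝ) : (1 - x ^ 2) * b ^ 2 ≤ quadForm x a b := by
  rw [quadForm_eq]; linarith [sq_nonneg (a - x * b)]

lemma quadForm_nonneg (hx : x ^ 2 < 1) (a b : ℝ) : 0 ≤ quadForm x a b := by
  rw [quadForm_eq]; have : 0 < 1 - x ^ 2 := by linarith
  positivity

lemma quadForm_step (hx : x ^ 2 < 1) {t : ℝ} (ht0 : 0 ≤ t) (ht1 : t ≤ 1) (a b : ℝ) :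
    quadForm x (2 * x * a - t * b) a ≤ (1 + (1 - t) / (1 - x ^ 2)) * quadForm x a b := by
  have hε : 0 < 1 - x ^ 2 := by linarith
  have ha : a ^ 2 ≤ quadForm x a b / (1 - x ^ 2) := by
    rw [le_div_iff₀ hε, mul_comm, quadForm_comm]; exact mul_sq_le_quadForm b a
  have h1t : 0 ≤ 1 - t := by linarith
  calc quadForm x (2 * x * a - t * b) a
      = t * quadForm x a b + (1 - t) * a ^ 2 - t * (1 - t) * b ^ 2 := by unfold quadForm; ring
    _ ≤ t * quadForm x a b + (1 - t) * (quadForm x a b / (1 - x ^ 2)) := by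
      have : 0 ≤ t * (1 - t) * b ^ 2 := by positivity
      nlinarith [mul_le_mul_of_nonneg_left ha h1t]
    _ ≤ (1 + (1 - t) / (1 - x ^ 2)) * quadForm x a b := by
      have := quadForm_nonneg hx a b
      rw [add_mul, mul_div_assoc', div_mul_eq_mul_div, one_mul]
      nlinarith

end Energy

lemma abs_pol_le {x : ℝ} (hx : x ^ 2 < 1) :
    ∃ C : ℝ, ∃ m : ℕ, ∀ n : ℕ, |pol n x| ≤ C * (n + 1) ^ m := by
  have hε : 0 < 1 - x ^ 2 := by linarith
  set E : ℕ → ℝ := fun n => quadForm x (pol (n + 1) x) (pol n x)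
  set m := ⌈1 / (1 - x ^ 2)⌉₊
  have hstep (n : ℕ) : E (n + 1) ≤ (1 + 1 / (1 - x ^ 2) / (n + 2)) * E n := by
    have ht : 1 - ((n : ℝ) + 1) / (n + 2) = 1 / (n + 2) := by field_simp; ring
    have := quadForm_step hx (t := (n + 1) / (n + 2)) (by positivity)
      (by rw [div_le_one (by positivity)]; linarith) (pol (n + 1) x) (pol n x)
    rw [ht, div_right_comm] at this
    simpa only [E, pol_add_two] using this
  have hE := le_mul_add_one_pow_of_succ_le (E := E) (Nat.le_ceil _)
    (fun n => quadForm_nonneg hx _ _) hstep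
  refine ⟨√(E 0 / (1 - x ^ 2)), m, fun n => ?_⟩
  have hpow : (1 : ℝ) ≤ (n + 1) ^ m := one_le_pow₀ (by linarith [n.cast_nonneg (α := ℝ)])
  have hsq : pol n x ^ 2 ≤ (√(E 0 / (1 - x ^ 2)) * (n + 1) ^ m) ^ 2 := by
    rw [mul_pow, Real.sq_sqrt (div_nonneg (quadForm_nonneg hx _ _) hε.le)]
    calc pol n x ^ 2 ≤ E n / (1 - x ^ 2) := by
          rw [le_div_iff₀ hε, mul_comm]; exact mul_sq_le_quadForm _ _
      _ ≤ E 0 / (1 - x ^ 2) * (n + 1) ^ m := by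
          rw [div_mul_eq_mul_div]; gcongr; exact hE n
      _ ≤ E 0 / (1 - x ^ 2) * ((n + 1) ^ m) ^ 2 := by
          have : 0 ≤ E 0 / (1 - x ^ 2) := div_nonneg (quadForm_nonneg hx _ _) hε.le
          gcongr; nlinarith
  exact abs_le_of_sq_le_sq' hsq (by positivity) |> abs_le.mpr

lemma pol_series_ode {x y F D : ℝ} (hF : HasSum (fun n => pol n x * y ^ n) F)
    (hD : HasSum (fun n => pol n x * (n * y ^ (n - 1))) D) :
    (1 - 2 * y * x + y ^ 2) * D = (2 * x - y) * F := by
  have hD_shift : HasSum (fun n : ℕ => (n + 1) * pol (n + 1) x * y ^ n) D := by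
    have h := (hasSum_nat_add_iff' 1).mpr hD
    simp only [Finset.sum_range_one, CharP.cast_eq_zero, zero_mul, mul_zero, sub_zero] at h
    exact h.congr_fun fun n => by push_cast; ring
  have hS : HasSum (fun n : ℕ => (n + 1) * pol n x * y ^ n) (y * D + F) :=
    ((hD.mul_left y).add hF).congr_fun fun n => by
      cases n with
      | zero => simp
      | succ n => push_cast; ring
  -- with `S = yD + F = ∑ (n + 1) Pₙ yⁿ`, the recurrence reads `D = 2xS - yS` coefficientwise
  have hyS : HasSum (fun n : ℕ => n * pol (n - 1) x * y ^ n) (y * (y * D + F)) := by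
    refine (hasSum_nat_add_iff' 1).mp ?_
    simp only [Finset.sum_range_one, CharP.cast_eq_zero, zero_mul, sub_zero]
    exact (hS.mul_left y).congr_fun fun n => by push_cast; ring
  have hD_rec : HasSum (fun n : ℕ => (n + 1) * pol (n + 1) x * y ^ n)
      (2 * x * (y * D + F) - y * (y * D + F)) :=
    ((hS.mul_left (2 * x)).sub hyS).congr_fun fun n => by rw [succ_mul_pol_succ]; ring
  linear_combination hD_shift.unique hD_rec

noncomputable def pollaczekGF (x σ y : ℝ) : ℝ :=
  (1 - 2 * y * x + y ^ 2) ^ (-(1 : ℝ) / 2) * Real.exp (x / σ * Real.arctan (y * σ / (1 - y * x)))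

lemma pollaczekGF_zero (x σ : ℝ) : pollaczekGF x σ 0 = 1 := by
  simp [pollaczekGF]

lemma pollaczekGF_ne_zero {x σ y : ℝ} (hx : x ^ 2 < 1) : pollaczekGF x σ y ≠ 0 := by
  have : 0 < 1 - 2 * y * x + y ^ 2 := by nlinarith [sq_nonneg (y - x)]
  exact (mul_pos (Real.rpow_pos_of_pos this _) (Real.exp_pos _)).ne'

lemma hasDerivAt_pollaczekGF {x σ y : ℝ} (hσ : σ ≠ 0) (hxσ : x ^ 2 + σ ^ 2 = 1)
    (hy : y * x ≠ 1) :
    HasDerivAt (pollaczekGF x σ) ((2 * x - y) / (1 - 2 * y * x + y ^ 2) * pollaczekGF x σ y) y := by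
  have hden : 1 - y * x ≠ 0 := sub_ne_zero.mpr hy.symm
  have hq_eq : 1 - 2 * y * x + y ^ 2 = (1 - y * x) ^ 2 + (y * σ) ^ 2 := by
    linear_combination -y ^ 2 * hxσ
  have hq : 0 < 1 - 2 * y * x + y ^ 2 := by rw [hq_eq]; positivity
  have hpow : HasDerivAt (fun w => (1 - 2 * w * x + w ^ 2) ^ (-(1 : ℝ) / 2))
      ((2 * y - 2 * x) * (-(1 : ℝ) / 2) * (1 - 2 * y * x + y ^ 2) ^ (-(1 : ℝ) / 2 - 1)) y := by
    have h : HasDerivAt (fun w => 1 - 2 * w * x + w ^ 2) (2 * y - 2 * x) y :=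
      (((hasDerivAt_id y).const_mul 2 |>.mul_const x |>.const_sub 1).add
        (hasDerivAt_pow 2 y)).congr_deriv (by simp; ring)
    exact h.rpow_const (Or.inl hq.ne')
  have harctan : HasDerivAt (fun w => x / σ * Real.arctan (w * σ / (1 - w * x)))
      (x / (1 - 2 * y * x + y ^ 2)) y := by
    refine ((((hasDerivAt_id y).mul_const σ).div ((hasDerivAt_id y).mul_const x |>.const_sub 1)
      hden).arctan.const_mul (x / σ)).congr_deriv ?_
    simp only [id, Pi.div_apply]
    rw [show 1 * σ * (1 - y * x) - y * σ * -(1 * x) = σ by ring, div_pow,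
      one_add_div (pow_ne_zero 2 hden), ← hq_eq, one_div_div]
    field_simp [show 1 - x * y ≠ 0 by rwa [mul_comm]]
  refine (hpow.mul harctan.exp).congr_deriv ?_
  rw [Real.rpow_sub_one hq.ne', pollaczekGF]
  field_simp
  ring

lemma summable_and_hasDerivAt_tsum_pol_mul_pow {x y : ℝ} (hx : x ^ 2 < 1) (hy : |y| < 1) :
    Summable (fun n => pol n x * y ^ n) ∧
      HasDerivAt (fun w => ∑' n, pol n x * w ^ n)
        ((2 * x - y) / (1 - 2 * y * x + y ^ 2) * ∑' n, pol n x * y ^ n) y := by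
  obtain ⟨C, m, hC⟩ := abs_pol_le hx
  obtain ⟨hsum, hsum', hderiv⟩ := summable_mul_pow_and_hasDerivAt_tsum hC hy
  have hq : 1 - 2 * y * x + y ^ 2 ≠ 0 := by nlinarith [sq_nonneg (y - x), abs_lt.mp hy]
  refine ⟨hsum, hderiv.congr_deriv ?_⟩
  rw [div_mul_eq_mul_div, eq_div_iff hq, mul_comm, ← pol_series_ode hsum.hasSum hsum'.hasSum]

/-- Generating function of the Pollaczek polynomials with a = 1, b = 0. -/
theorem stmt2 (θ : ℝ) (hθ : θ ∈ Set.Ioo 0 Real.pi) (z : ℝ) (hz : |z| < 1) :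
    HasSum (fun n : ℕ => pol n (Real.cos θ) * z ^ n)
      ((1 - 2 * z * Real.cos θ + z ^ 2) ^ (-(1:ℝ)/2) *
        Real.exp ((Real.cos θ / Real.sin θ) *
          Real.arctan (z * Real.sin θ / (1 - z * Real.cos θ)))) := by
  have hσ : 0 < Real.sin θ := Real.sin_pos_of_pos_of_lt_pi hθ.1 hθ.2
  have hxσ : Real.cos θ ^ 2 + Real.sin θ ^ 2 = 1 := Real.cos_sq_add_sin_sq θ
  have hx : Real.cos θ ^ 2 < 1 := by nlinarith
  have hball {y : ℝ} : y ∈ Metric.ball 0 1 ↔ |y| < 1 := by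
    rw [mem_ball_zero_iff, Real.norm_eq_abs]
  have hxy {y : ℝ} (hy : |y| < 1) : y * Real.cos θ ≠ 1 := by
    intro h
    have hy2 : y ^ 2 < 1 := by rw [← sq_abs]; nlinarith [abs_nonneg y]
    nlinarith [mul_nonneg (sub_nonneg.mpr hy2.le) (sq_nonneg (Real.cos θ))]
  have key : Set.EqOn (fun y => ∑' n, pol n (Real.cos θ) * y ^ n)
      (pollaczekGF (Real.cos θ) (Real.sin θ)) (Metric.ball 0 1) :=
    eqOn_of_hasDerivAt_mul_self Metric.isOpen_ball (convex_ball 0 1).isPreconnected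
      (fun y hy => (summable_and_hasDerivAt_tsum_pol_mul_pow hx (hball.mp hy)).2)
      (fun y hy => hasDerivAt_pollaczekGF hσ.ne' hxσ (hxy (hball.mp hy)))
      (fun _ _ => pollaczekGF_ne_zero hx) (Metric.mem_ball_self one_pos)
      (by simp [(hasSum_mul_zero_pow _).tsum_eq, pol, pollaczekGF_zero])
  have hsum := (summable_and_hasDerivAt_tsum_pol_mul_pow hx hz).1.hasSum
  rwa [show (∑' n, pol n (Real.cos θ) * z ^ n) = _ from key (hball.mpr hz)] at hsum
end

section
/- Let ρ ∈ (0,1). For every nonnegative integer m, ∑_{n=0}^∞ (1−ρ) ρ^n · (1/((m+1)(1+ρ))) ∑_{k=0}^∞ p(k,n,m) = (1−ρ) ρ^m. In words: when the tagged customer enters the stationary M/M/1-PS queue, the number ν of customers it leaves behind upon service completion is geometrically distributed with parameter ρ. -/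
open MeasureTheory Filter Topology

/-!
The weights `w n = (n + 1) ρ ^ n` form a reversible measure for the kernel, and one step of the
kernel removes exactly `ρ ^ n / (1 + ρ)` of weight at `n`. Hence with `T k = ∑ n, w n p(k,n,m)`
we get `∑ n, ρ ^ n p(k,n,m) = (1 + ρ) (T k - T (k + 1))`, which telescopes to
`(1 + ρ) (T 0 - lim T) = (1 + ρ) (m + 1) ρ ^ m`: indeed `T 0 = w m`, and `T k → 0` geometrically
because `n ↦ √ρ ^ (-n)` is a supersolution of the kernel with eigenvalue `2√ρ/(1+ρ) < 1`.
Exchanging the sums over `n` and `k` gives the claim.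
-/

lemma summable_natCast_add_one_mul_pow {r : ℝ} (hr : ‖r‖ < 1) :
    Summable fun n : ℕ => ((n:ℝ) + 1) * r ^ n :=
  ((summable_pow_mul_geometric_of_norm_lt_one 1 hr).add
    (summable_geometric_of_norm_lt_one hr)).congr fun n => by ring

lemma two_mul_sqrt_div_one_add_lt_one {ρ : ℝ} (hρ0 : 0 ≤ ρ) (hρ1 : ρ ≠ 1) :
    2 * √ρ / (1 + ρ) < 1 := by
  have hs : √ρ - 1 ≠ 0 := by
    rw [sub_ne_zero]; intro h; apply hρ1; rw [← Real.sq_sqrt hρ0, h, one_pow]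
  rw [div_lt_one (by positivity)]
  nlinarith [sq_pos_of_ne_zero hs, Real.sq_sqrt hρ0]

lemma norm_sqrt_lt_one {ρ : ℝ} (hρ1 : ρ < 1) : ‖√ρ‖ < 1 := by
  rw [Real.norm_of_nonneg (Real.sqrt_nonneg ρ), Real.sqrt_lt' one_pos]
  linarith

section
variable {ρ : ℝ}

lemma ker_zero (n m : ℕ) : ker ρ 0 n m = if n = m then 1 else 0 := rfl

lemma ker_succ_zero (k m : ℕ) : ker ρ (k + 1) 0 m = ρ / (1 + ρ) * ker ρ k 1 m := rfl

lemma ker_succ_succ (k n m : ℕ) : ker ρ (k + 1) (n + 1) m =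
    ρ / (1 + ρ) * ker ρ k (n + 2) m + ((n:ℝ) + 1) / (((n:ℝ) + 2) * (1 + ρ)) * ker ρ k n m := rfl

lemma ker_nonneg (hρ : 0 ≤ ρ) (k n m : ℕ) : 0 ≤ ker ρ k n m := by
  induction k generalizing n with
  | zero => rw [ker_zero]; split_ifs <;> norm_num
  | succ k ih =>
    cases n with
    | zero => exact mul_nonneg (by positivity) (ih 1)
    | succ n =>
      exact add_nonneg (mul_nonneg (by positivity) (ih _)) (mul_nonneg (by positivity) (ih n))

lemma ker_mul_sqrt_pow_le (hρ : 0 < ρ) (k n m : ℕ) :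
    ker ρ k n m * √ρ ^ n ≤ (2 * √ρ / (1 + ρ)) ^ k * √ρ ^ m := by
  obtain ⟨s, hs, rfl⟩ : ∃ s, 0 < s ∧ ρ = s ^ 2 := ⟨√ρ, by positivity, (Real.sq_sqrt hρ.le).symm⟩
  rw [Real.sqrt_sq hs.le]
  induction k generalizing n with
  | zero =>
    rw [ker_zero, pow_zero, one_mul]
    split_ifs with h
    · rw [h, one_mul]
    · rw [zero_mul]; positivity
  | succ k ih =>
    set X := (2 * s / (1 + s ^ 2)) ^ k * s ^ m
    have hX : 0 ≤ X := by positivity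
    have hL : (2 * s / (1 + s ^ 2)) ^ (k + 1) * s ^ m = 2 * (s / (1 + s ^ 2)) * X := by ring
    rw [hL]
    cases n with
    | zero =>
      calc ker (s ^ 2) (k + 1) 0 m * s ^ 0 = s / (1 + s ^ 2) * (ker (s ^ 2) k 1 m * s ^ 1) := by
            rw [ker_succ_zero]; ring
        _ ≤ s / (1 + s ^ 2) * X := by gcongr; exact ih 1
        _ ≤ 2 * (s / (1 + s ^ 2)) * X := by
            nlinarith [mul_nonneg (show 0 ≤ s / (1 + s ^ 2) by positivity) hX]
    | succ n =>
      have hd : ((n:ℝ) + 1) / (((n:ℝ) + 2) * (1 + s ^ 2)) * s ≤ s / (1 + s ^ 2) := by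
        rw [div_mul_eq_mul_div, div_le_div_iff₀ (by positivity) (by positivity)]; nlinarith
      calc ker (s ^ 2) (k + 1) (n + 1) m * s ^ (n + 1)
          = s / (1 + s ^ 2) * (ker (s ^ 2) k (n + 2) m * s ^ (n + 2))
            + ((n:ℝ) + 1) / (((n:ℝ) + 2) * (1 + s ^ 2)) * s * (ker (s ^ 2) k n m * s ^ n) := by
            rw [ker_succ_succ]; ring
        _ ≤ s / (1 + s ^ 2) * X + s / (1 + s ^ 2) * X := by
            gcongr
            · exact ih _
            · exact mul_nonneg (ker_nonneg (by positivity) _ _ _) (by positivity)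
            · exact ih n
        _ = 2 * (s / (1 + s ^ 2)) * X := by ring

lemma tsum_pow_mul_ker_eq_mul_sub (hρ : 0 < ρ) (k m : ℕ)
    (hsum : Summable fun n : ℕ => ((n:ℝ) + 1) * ρ ^ n * ker ρ k n m) :
    ∑' n : ℕ, ρ ^ n * ker ρ k n m = (1 + ρ) *
      (∑' n : ℕ, ((n:ℝ) + 1) * ρ ^ n * ker ρ k n m
        - ∑' n : ℕ, ((n:ℝ) + 1) * ρ ^ n * ker ρ (k + 1) n m) := by
  set g := fun n => ker ρ k n m
  set e : ℕ → ℝ := fun n => n * ρ ^ n * g n / (1 + ρ)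
  set f : ℕ → ℝ := fun n => ((n:ℝ) + 1) * ρ ^ (n + 1) * g n / (1 + ρ)
  have hg : ∀ n, 0 ≤ g n := fun n => ker_nonneg hρ.le k n m
  have he : Summable e := by
    refine hsum.of_nonneg_of_le
      (fun n => div_nonneg (mul_nonneg (by positivity) (hg n)) (by positivity)) fun n => ?_
    rw [div_le_iff₀ (by positivity)]
    have := mul_nonneg (pow_nonneg hρ.le n) (hg n)
    nlinarith [mul_nonneg (Nat.cast_nonneg (α := ℝ) n) (mul_nonneg hρ.le this)]
  have hf : Summable f := by
    refine (hsum.mul_left (ρ / (1 + ρ))).congr fun n => ?_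
    simp only [f, g]
    ring
  have h0 : (((0:ℕ):ℝ) + 1) * ρ ^ 0 * ker ρ (k + 1) 0 m = e 1 := by
    simp only [e, g, ker_succ_zero]; push_cast; ring
  have hshift : ∀ n : ℕ, ((((n + 1 : ℕ)):ℝ) + 1) * ρ ^ (n + 1) * ker ρ (k + 1) (n + 1) m
      = e (n + 2) + f n := fun n => by
    simp only [e, f, g, ker_succ_succ]; push_cast; field_simp; ring
  have hsucc : Summable fun n : ℕ =>
      ((((n + 1 : ℕ)):ℝ) + 1) * ρ ^ (n + 1) * ker ρ (k + 1) (n + 1) m := by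
    simpa only [hshift] using ((summable_nat_add_iff 2).2 he).add hf
  have hloss : ∑' n : ℕ, ρ ^ n * ker ρ k n m
      = (1 + ρ) * (∑' n : ℕ, ((n:ℝ) + 1) * ρ ^ n * ker ρ k n m - ∑' n, e n - ∑' n, f n) := by
    rw [← hsum.tsum_sub he, ← (hsum.sub he).tsum_sub hf, ← tsum_mul_left]
    refine tsum_congr fun n => ?_
    simp only [e, f, g]
    field_simp
    ring
  have hsplit := he.sum_add_tsum_nat_add 2
  rw [Finset.sum_range_succ, Finset.sum_range_one] at hsplit
  rw [hloss, tsum_eq_zero_add' (f := fun n : ℕ => ((n:ℝ) + 1) * ρ ^ n * ker ρ (k + 1) n m) hsucc,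
    h0, tsum_congr hshift, ((summable_nat_add_iff 2).2 he).tsum_add hf, ← hsplit]
  simp only [e, CharP.cast_eq_zero, zero_mul, zero_div]
  ring

lemma weight_mul_ker_le (hρ : 0 < ρ) (k n m : ℕ) :
    ((n:ℝ) + 1) * ρ ^ n * ker ρ k n m
      ≤ √ρ ^ m * ((2 * √ρ / (1 + ρ)) ^ k * (((n:ℝ) + 1) * √ρ ^ n)) := by
  have hρn : ρ ^ n = √ρ ^ n * √ρ ^ n := by rw [← mul_pow, Real.mul_self_sqrt hρ.le]
  calc ((n:ℝ) + 1) * ρ ^ n * ker ρ k n m = ((n:ℝ) + 1) * √ρ ^ n * (ker ρ k n m * √ρ ^ n) := by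
        rw [hρn]; ring
    _ ≤ ((n:ℝ) + 1) * √ρ ^ n * ((2 * √ρ / (1 + ρ)) ^ k * √ρ ^ m) := by
        exact mul_le_mul_of_nonneg_left (ker_mul_sqrt_pow_le hρ k n m) (by positivity)
    _ = _ := by ring

lemma summable_weight_mul_ker (hρ0 : 0 < ρ) (hρ1 : ρ < 1) (m : ℕ) :
    Summable fun p : ℕ × ℕ => ((p.2:ℝ) + 1) * ρ ^ p.2 * ker ρ p.1 p.2 m := by
  have hgeom := summable_geometric_of_lt_one (by positivity)
    (two_mul_sqrt_div_one_add_lt_one hρ0.le hρ1.ne)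
  have hcoe := summable_natCast_add_one_mul_pow (norm_sqrt_lt_one hρ1)
  exact Summable.of_nonneg_of_le (fun p => mul_nonneg (by positivity) (ker_nonneg hρ0.le _ _ _))
    (fun p => weight_mul_ker_le hρ0 p.1 p.2 m)
    ((hgeom.mul_of_nonneg hcoe (fun k => by positivity) (fun n => by positivity)).mul_left _)

lemma tendsto_tsum_weight_mul_ker (hρ0 : 0 < ρ) (hρ1 : ρ < 1) (m : ℕ) :
    Tendsto (fun k => ∑' n : ℕ, ((n:ℝ) + 1) * ρ ^ n * ker ρ k n m) atTop (𝓝 0) := by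
  have hcoe := summable_natCast_add_one_mul_pow (norm_sqrt_lt_one hρ1)
  refine squeeze_zero
    (g := fun k => √ρ ^ m * ((2 * √ρ / (1 + ρ)) ^ k * ∑' n : ℕ, ((n:ℝ) + 1) * √ρ ^ n))
    (fun k => tsum_nonneg fun n => mul_nonneg (by positivity) (ker_nonneg hρ0.le _ _ _))
    (fun k => ?_) ?_
  · rw [← tsum_mul_left, ← tsum_mul_left]
    exact ((summable_weight_mul_ker hρ0 hρ1 m).prod_factor k).tsum_le_tsum
      (weight_mul_ker_le hρ0 k · m) ((hcoe.mul_left _).mul_left _)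
  · simpa using ((tendsto_pow_atTop_nhds_zero_of_lt_one (by positivity)
      (two_mul_sqrt_div_one_add_lt_one hρ0.le hρ1.ne)).mul_const
      (∑' n : ℕ, ((n:ℝ) + 1) * √ρ ^ n)).const_mul (√ρ ^ m)

lemma hasSum_tsum_pow_mul_ker (hρ0 : 0 < ρ) (hρ1 : ρ < 1) (m : ℕ) :
    HasSum (fun k => ∑' n : ℕ, ρ ^ n * ker ρ k n m) ((1 + ρ) * (((m:ℝ) + 1) * ρ ^ m)) := by
  set T := fun k => ∑' n : ℕ, ((n:ℝ) + 1) * ρ ^ n * ker ρ k n m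
  have hstep : ∀ k, ∑' n : ℕ, ρ ^ n * ker ρ k n m = (1 + ρ) * (T k - T (k + 1)) := fun k =>
    tsum_pow_mul_ker_eq_mul_sub hρ0 k m ((summable_weight_mul_ker hρ0 hρ1 m).prod_factor k)
  have hT0 : T 0 = ((m:ℝ) + 1) * ρ ^ m := by
    simp only [T, ker_zero, mul_ite, mul_one, mul_zero, tsum_ite_eq]
  rw [hasSum_iff_tendsto_nat_of_nonneg
    (fun k => tsum_nonneg fun n => mul_nonneg (by positivity) (ker_nonneg hρ0.le _ _ _))]
  simp_rw [hstep, ← Finset.mul_sum, Finset.sum_range_sub']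
  simpa [hT0] using ((tendsto_tsum_weight_mul_ker hρ0 hρ1 m).const_sub (T 0)).const_mul (1 + ρ)

lemma summable_pow_mul_ker (hρ0 : 0 < ρ) (hρ1 : ρ < 1) (m : ℕ) :
    Summable (Function.uncurry fun k n : ℕ => ρ ^ n * ker ρ k n m) :=
  (summable_weight_mul_ker hρ0 hρ1 m).of_nonneg_of_le
    (fun p => mul_nonneg (by positivity) (ker_nonneg hρ0.le _ _ _))
    (fun p => by
      have := mul_nonneg (pow_nonneg hρ0.le p.2) (ker_nonneg hρ0.le p.1 p.2 m)
      simp only [Function.uncurry]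
      nlinarith [Nat.cast_nonneg (α := ℝ) p.2])

end

/-- In the stationary regime, ν is geometric with parameter ρ. -/
theorem stmt9 (ρ : ℝ) (hρ : ρ ∈ Set.Ioo (0:ℝ) 1) (m : ℕ) :
    ∑' n : ℕ, (1 - ρ) * ρ ^ n *
        ((1 / (((m:ℝ) + 1) * (1 + ρ))) * ∑' k : ℕ, ker ρ k n m) = (1 - ρ) * ρ ^ m := by
  obtain ⟨hρ0, hρ1⟩ := hρ
  have hswap : ∑' n : ℕ, ρ ^ n * ∑' k : ℕ, ker ρ k n m = (1 + ρ) * (((m:ℝ) + 1) * ρ ^ m) := by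
    simp_rw [← tsum_mul_left]
    rw [(summable_pow_mul_ker hρ0 hρ1 m).tsum_comm]
    exact (hasSum_tsum_pow_mul_ker hρ0 hρ1 m).tsum_eq
  calc ∑' n : ℕ, (1 - ρ) * ρ ^ n * ((1 / (((m:ℝ) + 1) * (1 + ρ))) * ∑' k : ℕ, ker ρ k n m)
      = (1 - ρ) / (((m:ℝ) + 1) * (1 + ρ)) * ∑' n : ℕ, ρ ^ n * ∑' k : ℕ, ker ρ k n m := by
        rw [← tsum_mul_left]; congr 1 with n; ring
    _ = (1 - ρ) * ρ ^ m := by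
        rw [hswap]; field_simp
end

section
/- As j → ∞ (j a positive integer, or more generally j → ∞ along the reals), ∫₀^{(π²/4) j^{2/3}} exp( −j^{1/3} ( φ + π/√φ ) ) dφ is asymptotically equivalent to √( (8/(3 j^{1/3})) · (π/2)^{5/3} ) · exp( −3 (π/2)^{2/3} j^{1/3} ), i.e. the ratio of the two quantities tends to 1. -/
open MeasureTheory Filter Topology

/-!
Laplace's method, made explicit. Write `π = 2a³`, so the phase is `g φ = φ + 2a³/√φ`, and
`g (x²) - 3a² = (x - a)² (x + 2a) / x`. After the substitution `φ = a² + s/√t` (with `t = j^{1/3}`)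
this gives `t (g φ - 3a²) = s² q(√φ)` with `q x = (x + 2a)/((x + a)² x)`, and `q a = 3/(4a²)`,
so the rescaled integrand tends to the Gaussian `exp (-3 s²/(4a²))`, whose integral is
`√(4πa²/3) = √(8a⁵/3)`. Dominated convergence applies: `q ≥ 1/(9a²)` on `√φ ≤ 2a`, and beyond
that, for `t ≥ 1`, `s ≥ s/√t = φ - a² > 0` forces `s² q(√φ) ≥ s/3`.
-/

open Real Set

noncomputable def phase (a φ : ℝ) : ℝ := φ + 2 * a ^ 3 / √φ

noncomputable def phaseQuot (a x : ℝ) : ℝ := (x + 2 * a) / ((x + a) ^ 2 * x)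

noncomputable def rescaledIntegrand (a t s : ℝ) : ℝ :=
  exp (-(t * (phase a (a ^ 2 + s / √t) - 3 * a ^ 2)))

section

variable {a t s x : ℝ}

lemma tendsto_neg_mul_sqrt_atBot (ha : 0 < a) : Tendsto (fun t ↦ -(a * √t)) atTop atBot :=
  tendsto_neg_atTop_atBot.comp (tendsto_sqrt_atTop.const_mul_atTop ha)

lemma sq_add_div_sqrt_pos (ht : 0 < t) (hs : -(a ^ 2 * √t) < s) : 0 < a ^ 2 + s / √t := by
  rw [← neg_lt_iff_pos_add', lt_div_iff₀ (sqrt_pos.2 ht)]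
  linarith

lemma phase_sq_sub (hx : 0 < x) :
    phase a (x ^ 2) - 3 * a ^ 2 = (x - a) ^ 2 * (x + 2 * a) / x := by
  rw [phase, sqrt_sq hx.le]
  field_simp
  ring

lemma mul_phase_sub_eq (ha : 0 < a) (ht : 0 < t) (hs : -(a ^ 2 * √t) < s) :
    t * (phase a (a ^ 2 + s / √t) - 3 * a ^ 2) = s ^ 2 * phaseQuot a (√(a ^ 2 + s / √t)) := by
  have hpos := sq_add_div_sqrt_pos ht hs
  set x := √(a ^ 2 + s / √t)
  have hx : 0 < x := sqrt_pos.2 hpos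
  have hx2 : x ^ 2 = a ^ 2 + s / √t := sq_sqrt hpos.le
  have hxa : (x - a) * (x + a) * √t = s := by
    rw [show (x - a) * (x + a) = x ^ 2 - a ^ 2 by ring, hx2]; field_simp; ring
  rw [← hx2, phase_sq_sub hx, phaseQuot, ← hxa, mul_pow _ √t, sq_sqrt ht.le]
  field_simp

lemma inv_le_phaseQuot (ha : 0 < a) (hx : 0 < x) (hx2a : x ≤ 2 * a) :
    (9 * a ^ 2)⁻¹ ≤ phaseQuot a x := by
  rw [phaseQuot, inv_eq_one_div, div_le_div_iff₀ (by positivity) (by positivity)]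
  have h : (x + a) ^ 2 ≤ 9 * a ^ 2 := by nlinarith
  nlinarith [mul_le_mul h (by linarith : x ≤ x + 2 * a) hx.le (by positivity)]

lemma third_le_mul_phaseQuot (ha : 0 < a) (hx : 2 * a ≤ x) :
    1 / 3 ≤ (x ^ 2 - a ^ 2) * phaseQuot a x := by
  have hx0 : 0 < x := by linarith
  rw [phaseQuot, mul_div_assoc', div_le_div_iff₀ (by norm_num) (by positivity)]
  nlinarith [mul_nonneg (sub_nonneg.2 hx) (mul_pos hx0 ha).le, mul_pos hx0 ha,
    mul_nonneg (sub_nonneg.2 hx) (mul_pos hx0 hx0).le]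

lemma rescaledIntegrand_le (ha : 0 < a) (ht : 1 ≤ t) (hs : -(a ^ 2 * √t) < s) :
    rescaledIntegrand a t s ≤
      exp (-(9 * a ^ 2)⁻¹ * s ^ 2) + (Ioi 0).indicator (fun s ↦ exp (-(1 / 3) * s)) s := by
  have ht0 : 0 < t := by linarith
  have hr : 0 < √t := sqrt_pos.2 ht0
  have hpos := sq_add_div_sqrt_pos ht0 hs
  rw [rescaledIntegrand, mul_phase_sub_eq ha ht0 hs]
  set x := √(a ^ 2 + s / √t)
  have hx : 0 < x := sqrt_pos.2 hpos
  have hx2 : x ^ 2 = a ^ 2 + s / √t := sq_sqrt hpos.le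
  rcases le_or_gt x (2 * a) with hx2a | hx2a
  · refine le_add_of_le_of_nonneg ?_ (indicator_nonneg (fun _ _ ↦ (exp_pos _).le) s)
    gcongr
    nlinarith [inv_le_phaseQuot ha hx hx2a, sq_nonneg s]
  · have hs0 : 0 < s := by
      have : 0 < s / √t := by nlinarith
      exact (div_pos_iff_of_pos_right hr).1 this
    have hsx : x ^ 2 - a ^ 2 ≤ s := by
      rw [hx2, add_sub_cancel_left]
      exact div_le_self hs0.le (one_le_sqrt.2 ht)
    rw [indicator_of_mem (mem_Ioi.2 hs0)]
    refine le_add_of_nonneg_of_le (exp_pos _).le ?_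
    gcongr
    have hq := third_le_mul_phaseQuot ha hx2a.le
    have hq0 : 0 ≤ phaseQuot a x := by unfold phaseQuot; positivity
    nlinarith [mul_le_mul_of_nonneg_left hsx (mul_nonneg hs0.le hq0)]

lemma tendsto_rescaledIntegrand (ha : 0 < a) (s : ℝ) :
    Tendsto (fun t ↦ rescaledIntegrand a t s) atTop (𝓝 (exp (-(3 / (4 * a ^ 2)) * s ^ 2))) := by
  have hx : Tendsto (fun t ↦ √(a ^ 2 + s / √t)) atTop (𝓝 a) := by
    have h := ((tendsto_const_nhds (x := s)).div_atTop tendsto_sqrt_atTop).const_add (a ^ 2)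
    simpa [sqrt_sq ha.le] using h.sqrt
  have hq : ContinuousAt (phaseQuot a) a := by
    unfold phaseQuot
    exact ContinuousAt.div (by fun_prop) (by fun_prop) (by positivity)
  have hlim : phaseQuot a a = 3 / (4 * a ^ 2) := by
    unfold phaseQuot; field_simp; ring
  have hs : ∀ᶠ t in atTop, -(a ^ 2 * √t) < s :=
    (tendsto_neg_mul_sqrt_atBot (by positivity)).eventually_lt_atBot s
  rw [show -(3 / (4 * a ^ 2)) * s ^ 2 = -(s ^ 2 * phaseQuot a a) by rw [hlim]; ring]
  refine Tendsto.congr' ?_ ((continuous_exp.tendsto _).comp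
    ((hq.tendsto.comp hx).const_mul (s ^ 2)).neg)
  filter_upwards [hs, eventually_gt_atTop 0] with t hst ht
  rw [rescaledIntegrand, mul_phase_sub_eq ha ht hst]
  rfl

lemma integral_exp_neg_mul_phase_eq (ht : 0 < t) (U : ℝ) :
    ∫ φ in 0..U, exp (-t * phase a φ) =
      exp (-3 * a ^ 2 * t) / √t *
        ∫ s in -(a ^ 2 * √t)..(U - a ^ 2) * √t, rescaledIntegrand a t s := by
  have hr : 0 < √t := sqrt_pos.2 ht
  have hsub : ∀ s, rescaledIntegrand a t s =
      exp (3 * a ^ 2 * t) * exp (-t * phase a (a ^ 2 + s / √t)) := by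
    intro s
    rw [rescaledIntegrand, ← exp_add]
    ring_nf
  have hcv : ∫ s in -(a ^ 2 * √t)..(U - a ^ 2) * √t, exp (-t * phase a (a ^ 2 + s / √t)) =
      √t * ∫ φ in 0..U, exp (-t * phase a φ) := by
    rw [intervalIntegral.integral_comp_div (fun y ↦ exp (-t * phase a (a ^ 2 + y))) hr.ne',
      intervalIntegral.integral_comp_add_left (fun φ ↦ exp (-t * phase a φ)),
      neg_div, mul_div_cancel_right₀ _ hr.ne', mul_div_cancel_right₀ _ hr.ne',
      add_neg_cancel, add_sub_cancel, smul_eq_mul]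
  simp only [hsub, intervalIntegral.integral_const_mul, hcv]
  rw [← mul_assoc, ← mul_assoc, div_mul_eq_mul_div, ← exp_add,
    show -3 * a ^ 2 * t + 3 * a ^ 2 * t = 0 by ring, exp_zero, one_div_mul_cancel hr.ne', one_mul]

lemma measurable_rescaledIntegrand : Measurable (rescaledIntegrand a t) := by
  unfold rescaledIntegrand phase
  fun_prop

lemma tendsto_integral_rescaledIntegrand (ha : 0 < a) {U : ℝ → ℝ} (hU : Tendsto U atTop atTop) :
    Tendsto (fun t ↦ ∫ s in -(a ^ 2 * √t)..(U t - a ^ 2) * √t, rescaledIntegrand a t s) atTop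
      (𝓝 (∫ s, exp (-(3 / (4 * a ^ 2)) * s ^ 2))) := by
  set L : ℝ → ℝ := fun t ↦ -(a ^ 2 * √t)
  set R : ℝ → ℝ := fun t ↦ (U t - a ^ 2) * √t
  have hL : Tendsto L atTop atBot := tendsto_neg_mul_sqrt_atBot (by positivity)
  have hR : Tendsto R atTop atTop :=
    (tendsto_atTop_add_const_right _ _ hU).atTop_mul_atTop₀ tendsto_sqrt_atTop
  have hindicator : ∀ᶠ t in atTop, ∫ s in L t..R t, rescaledIntegrand a t s =
      ∫ s, (Ioc (L t) (R t)).indicator (rescaledIntegrand a t) s := by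
    filter_upwards [hL.eventually_le_atBot 0, hR.eventually_ge_atTop 0] with t hLt hRt
    rw [intervalIntegral.integral_of_le (hLt.trans hRt), integral_indicator measurableSet_Ioc]
  refine Tendsto.congr' (EventuallyEq.symm hindicator) ?_
  refine tendsto_integral_filter_of_dominated_convergence
    (fun s ↦ exp (-(9 * a ^ 2)⁻¹ * s ^ 2) + (Ioi 0).indicator (fun s ↦ exp (-(1 / 3) * s)) s)
    (Eventually.of_forall fun t ↦
      (measurable_rescaledIntegrand.indicator measurableSet_Ioc).aestronglyMeasurable)
    ?_ ?_ ?_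
  · filter_upwards [eventually_ge_atTop 1] with t ht
    refine Eventually.of_forall fun s ↦ ?_
    by_cases hs : s ∈ Ioc (L t) (R t)
    · rw [indicator_of_mem hs]
      exact (norm_of_nonneg (exp_pos _).le).trans_le (rescaledIntegrand_le ha ht hs.1)
    · rw [indicator_of_notMem hs, norm_zero]
      exact add_nonneg (exp_pos _).le (indicator_nonneg (fun _ _ ↦ (exp_pos _).le) s)
  · exact (integrable_exp_neg_mul_sq (by positivity)).add
      ((exp_neg_integrableOn_Ioi 0 (by norm_num)).integrable_indicator measurableSet_Ioi)
  · refine Eventually.of_forall fun s ↦ (tendsto_rescaledIntegrand ha s).congr' ?_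
    filter_upwards [hL.eventually_lt_atBot s, hR.eventually_ge_atTop s] with t hLt hRt
    rw [indicator_of_mem (show s ∈ Ioc (L t) (R t) from ⟨hLt, hRt⟩)]

theorem tendsto_integral_exp_neg_mul_phase_div (ha : 0 < a) {U : ℝ → ℝ}
    (hU : Tendsto U atTop atTop) :
    Tendsto (fun t ↦ (∫ φ in 0..U t, exp (-t * phase a φ)) /
      (√(4 * π * a ^ 2 / (3 * t)) * exp (-3 * a ^ 2 * t))) atTop (𝓝 1) := by
  have hgauss : ∫ s, exp (-(3 / (4 * a ^ 2)) * s ^ 2) = √(4 * π * a ^ 2 / 3) := by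
    rw [integral_gaussian]; congr 1; field_simp
  have hC : √(4 * π * a ^ 2 / 3) ≠ 0 := by positivity
  have hlim := (tendsto_integral_rescaledIntegrand ha hU).div_const √(4 * π * a ^ 2 / 3)
  rw [hgauss, div_self hC] at hlim
  refine hlim.congr' ?_
  filter_upwards [eventually_gt_atTop 0] with t ht
  rw [integral_exp_neg_mul_phase_eq ht, div_mul_eq_div_div_swap, ← div_div,
    sqrt_div' _ ht.le]
  field_simp

end

/-- Laplace-method asymptotics of the integral `∫₀^{(π²/4) j^{2/3}} e^{−j^{1/3}(φ+π/√φ)} dφ`. -/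
theorem stmt14 :
    Filter.Tendsto (fun j : ℝ =>
      (∫ φ in (0:ℝ)..((Real.pi ^ 2 / 4) * j ^ ((2:ℝ)/3)),
        Real.exp (-(j ^ ((1:ℝ)/3)) * (φ + Real.pi / Real.sqrt φ))) /
      (Real.sqrt ((8 / (3 * j ^ ((1:ℝ)/3))) * (Real.pi/2) ^ ((5:ℝ)/3)) *
        Real.exp (-3 * (Real.pi/2) ^ ((2:ℝ)/3) * j ^ ((1:ℝ)/3))))
      Filter.atTop (nhds 1) := by
  set a := (π / 2) ^ ((1:ℝ) / 3) with ha_def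
  have hπ2 : 0 < π / 2 := by positivity
  have ha : 0 < a := rpow_pos_of_pos hπ2 _
  have hpow (n : ℕ) : (π / 2) ^ ((n:ℝ) / 3) = a ^ n := by
    rw [ha_def, ← rpow_natCast, ← rpow_mul hπ2.le]; ring_nf
  have h2a3 : 2 * a ^ 3 = π := by rw [← hpow 3]; norm_num; ring
  have ha2 : (π / 2) ^ ((2:ℝ) / 3) = a ^ 2 := mod_cast hpow 2
  have ha5 : (π / 2) ^ ((5:ℝ) / 3) = a ^ 5 := mod_cast hpow 5
  have hU : Tendsto (fun t : ℝ ↦ π ^ 2 / 4 * t ^ 2) atTop atTop :=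
    (tendsto_pow_atTop two_ne_zero).const_mul_atTop (by positivity)
  refine ((tendsto_integral_exp_neg_mul_phase_div ha hU).comp
    (tendsto_rpow_atTop (by norm_num : (0:ℝ) < 1 / 3))).congr' ?_
  filter_upwards [eventually_gt_atTop 0] with j hj
  have hj2 : (j ^ ((1:ℝ) / 3)) ^ 2 = j ^ ((2:ℝ) / 3) := by
    rw [← rpow_natCast, ← rpow_mul hj.le]; norm_num
  simp only [Function.comp_apply, phase, h2a3, hj2, ha2, ha5]
  rw [← h2a3]
  congr 3
  ring
end

section
/- Let ρ ∈ (0,1) and c_j = ((1−ρ)/(ρ(1+ρ))) ∑_{k=j}^∞ binom(2k,k) ρ^k / ((k+1)(1+ρ)^{2k}). Then, as j → ∞, c_j / [ ((1+ρ)/(ρ(1−ρ)√π)) · j^{−3/2} · (4ρ/(1+ρ)²)^j ] → 1. -/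
open MeasureTheory Filter Topology

/-- Distribution of the number of customers served in the residual busy period. -/
noncomputable def resBusy (ρ : ℝ) (ℓ : ℕ) : ℝ :=
  ((1 - ρ) / (ρ * (1 + ρ))) * ∑' k : ℕ,
    (Nat.choose (2*(k + ℓ)) (k + ℓ) : ℝ) * ρ ^ (k + ℓ) /
      (((k:ℝ) + (ℓ:ℝ) + 1) * (1 + ρ) ^ (2*(k + ℓ)))

/-! `resBusy ρ j` is a constant multiple of the tail `∑_{k ≥ j} a_k` of
`a_k = binom(2k,k) x^k / (k+1)` with `x = ρ/(1+ρ)²`. The ratio `a_{k+1}/a_k = 4x(2k+1)/(2k+4)`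
increases to `q = 4x < 1`, so `a_{k+j}/a_j ≤ q^k` and Tannery's theorem gives
`∑_{k ≥ j} a_k ~ a_j/(1-q)`. Stirling's formula, through `binom(2j,j) ~ 4^j/√(πj)`, gives
`a_j ~ j^{-3/2} q^j/√π`. -/

open Nat in
theorem centralBinom_mul_sqrt_div_four_pow_eq {n : ℕ} (hn : n ≠ 0) :
    (centralBinom n : ℝ) * √n / 4 ^ n =
      Stirling.stirlingSeq (2 * n) / Stirling.stirlingSeq n ^ 2 := by
  have hfact : ((2 * n)! : ℝ) = centralBinom n * n ! * n ! := by
    have h := choose_mul_factorial_mul_factorial (le_add_right le_rfl : n ≤ n + n)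
    rw [Nat.add_sub_cancel] at h
    rw [centralBinom_eq_two_mul_choose, two_mul]
    exact_mod_cast h.symm
  have hsqrt : √(2 * (2 * n : ℕ) : ℝ) = 2 * √n := by
    push_cast
    rw [show (2 : ℝ) * (2 * n) = 2 ^ 2 * n by ring, Real.sqrt_mul (by norm_num),
      Real.sqrt_sq (by norm_num)]
  have hpow :
      ((2 * n : ℕ) / Real.exp 1 : ℝ) ^ (2 * n) = 4 ^ n * ((n / Real.exp 1) ^ n) ^ 2 := by
    push_cast
    rw [mul_div_assoc, mul_pow, pow_mul, pow_mul]
    norm_num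
    ring
  simp only [Stirling.stirlingSeq, hsqrt, hpow, hfact, div_pow, mul_pow,
    Real.sq_sqrt (by positivity : (0 : ℝ) ≤ 2 * n)]
  field_simp
  rw [Real.sq_sqrt n.cast_nonneg]

theorem tendsto_centralBinom_mul_sqrt_div_four_pow :
    Tendsto (fun n : ℕ => (n.centralBinom : ℝ) * √n / 4 ^ n) atTop
      (𝓝 (√Real.pi)⁻¹) := by
  have hπ : √Real.pi ≠ 0 := by positivity
  have h := (Stirling.tendsto_stirlingSeq_sqrt_pi.comp (tendsto_id.const_mul_atTop' two_pos)).div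
    (Stirling.tendsto_stirlingSeq_sqrt_pi.pow 2) (pow_ne_zero 2 hπ)
  rw [sq, div_mul_cancel_left₀ hπ] at h
  refine h.congr' ?_
  filter_upwards [eventually_ne_atTop 0] with n hn
  exact (centralBinom_mul_sqrt_div_four_pow_eq hn).symm

theorem tendsto_tsum_nat_add_div_self_of_ratio {a : ℕ → ℝ} {q : ℝ} (hpos : ∀ n, 0 < a n)
    (hle : ∀ n, a (n + 1) ≤ q * a n) (hq : q < 1)
    (hratio : Tendsto (fun n => a (n + 1) / a n) atTop (𝓝 q)) :
    Tendsto (fun n => (∑' k, a (k + n)) / a n) atTop (𝓝 (1 - q)⁻¹) := by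
  have hq0 : 0 ≤ q := nonneg_of_mul_nonneg_left ((hpos 1).le.trans (hle 0)) (hpos 0)
  have hbound : ∀ k n, a (k + n) ≤ q ^ k * a n := by
    intro k n
    induction k with
    | zero => simp
    | succ k ih =>
      calc a (k + 1 + n) = a (k + n + 1) := by rw [add_right_comm]
        _ ≤ q * a (k + n) := hle _
        _ ≤ q * (q ^ k * a n) := mul_le_mul_of_nonneg_left ih hq0
        _ = q ^ (k + 1) * a n := by ring
  have hlim : ∀ k, Tendsto (fun n => a (k + n) / a n) atTop (𝓝 (q ^ k)) := by
    intro k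
    induction k with
    | zero => simpa using tendsto_const_nhds.congr fun n => (div_self (hpos n).ne').symm
    | succ k ih =>
      rw [pow_succ']
      refine ((hratio.comp (tendsto_add_atTop_nat k)).mul ih).congr fun n => ?_
      simp only [Function.comp_apply, add_right_comm k 1 n, add_comm n k]
      field_simp [(hpos (k + n)).ne']
  have h := tendsto_tsum_of_dominated_convergence (summable_geometric_of_lt_one hq0 hq) hlim
    (Eventually.of_forall fun n k => by
      rw [Real.norm_of_nonneg (div_pos (hpos _) (hpos n)).le, div_le_iff₀ (hpos n)]
      exact hbound k n)
  simpa only [tsum_div_const, tsum_geometric_of_lt_one hq0 hq] using h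

noncomputable def busyTerm (x : ℝ) (k : ℕ) : ℝ := k.centralBinom * x ^ k / (k + 1)

theorem busyTerm_pos {x : ℝ} (hx : 0 < x) (k : ℕ) : 0 < busyTerm x k := by
  have := k.centralBinom_pos
  unfold busyTerm
  positivity

theorem busyTerm_succ (x : ℝ) (k : ℕ) :
    busyTerm x (k + 1) = 4 * x * ((1 + 2 * k) / (4 + 2 * k)) * busyTerm x k := by
  have h : ((k + 1 : ℕ) : ℝ) * (k + 1).centralBinom = 2 * (2 * k + 1) * k.centralBinom := by
    exact_mod_cast k.succ_mul_centralBinom_succ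
  unfold busyTerm
  push_cast at h ⊢
  field_simp
  linear_combination 2 * x * x ^ k * ((k : ℝ) + 2) * h

theorem busyTerm_succ_le {x : ℝ} (hx : 0 ≤ x) (k : ℕ) :
    busyTerm x (k + 1) ≤ 4 * x * busyTerm x k := by
  rw [busyTerm_succ]
  have hfrac : (1 + 2 * k : ℝ) / (4 + 2 * k) ≤ 1 := by
    rw [div_le_one (by positivity)]
    linarith
  exact mul_le_mul_of_nonneg_right (mul_le_of_le_one_right (by positivity) hfrac)
    (by unfold busyTerm; positivity)

theorem tendsto_busyTerm_succ_div {x : ℝ} (hx : 0 < x) :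
    Tendsto (fun k => busyTerm x (k + 1) / busyTerm x k) atTop (𝓝 (4 * x)) := by
  have h := (tendsto_add_mul_div_add_mul_atTop_nhds (1 : ℝ) 4 2 two_ne_zero).const_mul (4 * x)
  rw [div_self two_ne_zero, mul_one] at h
  refine h.congr fun k => ?_
  rw [busyTerm_succ, mul_div_cancel_right₀ _ (busyTerm_pos hx k).ne']

theorem tendsto_busyTerm_div_rpow_mul_pow {x : ℝ} (hx : 0 < x) :
    Tendsto (fun j : ℕ => busyTerm x j / ((j : ℝ) ^ (-(3 : ℝ) / 2) * (4 * x) ^ j)) atTop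
      (𝓝 (√Real.pi)⁻¹) := by
  have h := tendsto_centralBinom_mul_sqrt_div_four_pow.mul (tendsto_natCast_div_add_atTop (1 : ℝ))
  rw [mul_one] at h
  refine h.congr' ?_
  filter_upwards [eventually_ne_atTop 0] with j hj
  have hj' : (0 : ℝ) < j := by positivity
  rw [show (-(3 : ℝ) / 2) = -1 - 1 / 2 by norm_num, Real.rpow_sub hj', Real.rpow_neg_one,
    ← Real.sqrt_eq_rpow, busyTerm, mul_pow]
  have : (0 : ℝ) < √j := by positivity
  field_simp

theorem resBusy_eq_tsum_busyTerm (ρ : ℝ) (ℓ : ℕ) :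
    resBusy ρ ℓ =
      (1 - ρ) / (ρ * (1 + ρ)) * ∑' k, busyTerm (ρ / (1 + ρ) ^ 2) (k + ℓ) := by
  unfold resBusy busyTerm
  congr 1
  refine tsum_congr fun k => ?_
  rw [Nat.centralBinom_eq_two_mul_choose, div_pow, ← pow_mul]
  push_cast
  simp only [div_eq_mul_inv, mul_inv]
  ring

/-- Asymptotics of `P(b = j)` as j → ∞. -/
theorem stmt17 (ρ : ℝ) (hρ : ρ ∈ Set.Ioo (0:ℝ) 1) :
    Filter.Tendsto (fun j : ℕ =>
      resBusy ρ j /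
        (((1 + ρ) / (ρ * (1 - ρ) * Real.sqrt Real.pi)) * (j:ℝ) ^ (-(3:ℝ)/2) *
          (4 * ρ / (1 + ρ) ^ 2) ^ j))
      Filter.atTop (nhds 1) := by
  obtain ⟨hρ0, hρ1⟩ := hρ
  set x := ρ / (1 + ρ) ^ 2 with hx_def
  have hx : 0 < x := by positivity
  have hq : 1 - 4 * x = (1 - ρ) ^ 2 / (1 + ρ) ^ 2 := by
    rw [hx_def]
    field_simp
    ring
  have hq1 : 4 * x < 1 := sub_pos.1 (hq ▸ div_pos (pow_pos (sub_pos.2 hρ1) 2) (by positivity))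
  have htail := tendsto_tsum_nat_add_div_self_of_ratio (busyTerm_pos hx) (busyTerm_succ_le hx.le) hq1
    (tendsto_busyTerm_succ_div hx)
  have hlim := ((htail.const_mul ((1 - ρ) / (ρ * (1 + ρ)))).mul
    (tendsto_busyTerm_div_rpow_mul_pow hx)).div_const ((1 + ρ) / (ρ * (1 - ρ) * √Real.pi))
  have hone : (1 - ρ) / (ρ * (1 + ρ)) * (1 - 4 * x)⁻¹ * (√Real.pi)⁻¹ /
      ((1 + ρ) / (ρ * (1 - ρ) * √Real.pi)) = 1 := by
    rw [hq]
    have : 0 < 1 - ρ := by linarith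
    field_simp
  rw [hone] at hlim
  refine hlim.congr' ?_
  filter_upwards [eventually_ne_atTop 0] with j hj
  rw [resBusy_eq_tsum_busyTerm, ← hx_def, mul_div_assoc 4 ρ, ← hx_def]
  have := busyTerm_pos hx j
  have : (0 : ℝ) < (j : ℝ) ^ (-(3 : ℝ) / 2) := by positivity
  field_simp
end
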